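/- Let k ≥ 3 and 1 ≤ m ≤ k−2 be integers, and define γ₁(k,m) = (k−m)·ln 2 + √((k−m)²(ln 2)² + 2(k−m)(2^k − 2^{k−m})·ln 2). Then for every integer n with 2^k − 2^{k−m} + γ₁(k,m) ≤ n ≤ 2^k − 2^{k−m} + 2^{k−m−2}, the code S_{n,k} is ugly (not satisfactory). -/

import Mathlib

open Finset

/-- The value of column `j` (0-indexed) of the matrix
`H_k = [H_k^(k-1) | H_k^(k-2) | … | H_k^(0)]`, read as a `k`-bit integer with
row 1 as the most significant bit.  (Column `c` of the block `H_k^(m)` is the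
vector `(0,…,0,1,binary_m(c))`, i.e. the integer `2^m + c`; the block `H_k^(m)`
occupies global columns `[2^k - 2^(m+1), 2^k - 2^m)`, so that
`m = ⌊log₂ (2^k - 1 - j)⌋` and the value is `3·2^m + j - 2^k`.) -/
def colVal (k j : ℕ) : ℕ := 3 * 2 ^ Nat.log2 (2 ^ k - 1 - j) + j - 2 ^ k

/-- Row `i` (1-indexed, `1 ≤ i ≤ k`) of the matrix `H_k(n)` consisting of the
first `n` columns of `H_k`. -/
def Hrow (k n : ℕ) (i : ℕ) : Fin n → ZMod 2 :=
  fun j => if Nat.testBit (colVal k j) (k - i) then 1 else 0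

/-- The code `S_{n,k}`: the binary linear code spanned by the rows of `H_k(n)`. -/
def SCode (k n : ℕ) : Submodule (ZMod 2) (Fin n → ZMod 2) :=
  Submodule.span (ZMod 2) (Set.range fun i : Fin k => Hrow k n ((i : ℕ) + 1))

/-- `w_i`: the Hamming weight of the `i`-th (1-indexed) row of `H_k(n)`. -/
def rowWt (k n i : ℕ) : ℕ := hammingNorm (Hrow k n i)

/-- `α_i`: the `i`-th entry (1-indexed) of the last (`n`-th) column of `H_k(n)`;
`true` encodes `1` and `false` encodes `0`. -/
def alphaBit (k n i : ℕ) : Bool := Nat.testBit (colVal k (n - 1)) (k - i)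

/-- Row `i` (1-indexed) of the matrix `M_{n,k}`, whose `j`-th column
(0-indexed) is the `k`-bit binary representation of `2^k - 1 - j`, MSB first. -/
def Mrow (k n : ℕ) (i : ℕ) : Fin n → ZMod 2 :=
  fun j => if Nat.testBit (2 ^ k - 1 - (j : ℕ)) (k - i) then 1 else 0

/-- The code `D_{n,k}`: the binary linear code spanned by the rows of `M_{n,k}`. -/
def DCode (k n : ℕ) : Submodule (ZMod 2) (Fin n → ZMod 2) :=
  Submodule.span (ZMod 2) (Set.range fun i : Fin k => Mrow k n ((i : ℕ) + 1))

/-- The value of column `j` (0-indexed) of the generalized matrix consisting of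
`t-1` copies of `H_k^(k-1)` followed by `H_k(n')`, where `n = 2^(k-1)·(t-1) + n'`
with `2^(k-1) ≤ n' ≤ 2^k - 1` (so `t - 1 = (n - 2^(k-1)) / 2^(k-1)`). -/
def gcolVal (k n j : ℕ) : ℕ :=
  if j < (n - 2 ^ (k - 1)) / 2 ^ (k - 1) * 2 ^ (k - 1) then
    2 ^ (k - 1) + j % 2 ^ (k - 1)
  else colVal k (j - (n - 2 ^ (k - 1)) / 2 ^ (k - 1) * 2 ^ (k - 1))

/-- The generalized code `S_{n,k}`, defined for every `n ≥ 2^(k-1)`: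
the span of the rows of the `k × n` matrix obtained by concatenating `t-1`
copies of `H_k^(k-1)` followed by `H_k(n')`. -/
def GSCode (k n : ℕ) : Submodule (ZMod 2) (Fin n → ZMod 2) :=
  Submodule.span (ZMod 2)
    (Set.range fun i : Fin k => fun j : Fin n =>
      if Nat.testBit (gcolVal k n (j : ℕ)) (k - ((i : ℕ) + 1)) then (1 : ZMod 2) else 0)

/-- The minimum distance of a binary linear code: the least Hamming weight of a
nonzero codeword. -/
noncomputable def minDist {n : ℕ} (C : Submodule (ZMod 2) (Fin n → ZMod 2)) : ℕ :=
  sInf {w | ∃ c ∈ C, c ≠ 0 ∧ hammingNorm c = w}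

/-- `A_w`: the number of codewords of `C` of Hamming weight `w`. -/
noncomputable def numWt {n : ℕ} (C : Submodule (ZMod 2) (Fin n → ZMod 2)) (w : ℕ) : ℕ :=
  Set.ncard {c : Fin n → ZMod 2 | c ∈ C ∧ hammingNorm c = w}

/-- The undetected error probability
`P_ue(C,p) = Σ_{w=1}^n A_w p^w (1-p)^(n-w)`. -/
noncomputable def Pue {n : ℕ} (C : Submodule (ZMod 2) (Fin n → ZMod 2)) (p : ℝ) : ℝ :=
  ∑ w ∈ Finset.Icc 1 n, (numWt C w : ℝ) * p ^ w * (1 - p) ^ (n - w)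

/-- A code is proper if `p ↦ P_ue(C,p)` is monotonically increasing on `[0, 1/2]`. -/
def IsProper {n : ℕ} (C : Submodule (ZMod 2) (Fin n → ZMod 2)) : Prop :=
  MonotoneOn (Pue C) (Set.Icc (0 : ℝ) (1 / 2))

/-- An `[n,k]` code is satisfactory if `P_ue(C,p) ≤ 2^(k-n)` for all `p ∈ [0,1/2]`. -/
def IsSatisfactory (k : ℕ) {n : ℕ} (C : Submodule (ZMod 2) (Fin n → ZMod 2)) : Prop :=
  ∀ p ∈ Set.Icc (0 : ℝ) (1 / 2), Pue C p ≤ (2 : ℝ) ^ ((k : ℤ) - (n : ℤ))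

/-- The binary entropy function `h(x) = -x log₂ x - (1-x) log₂ (1-x)`. -/
noncomputable def binEnt (x : ℝ) : ℝ :=
  -(x * Real.logb 2 x) - (1 - x) * Real.logb 2 (1 - x)

/-- `U_m = (2^(m+2) - 3)·(1 - h((2^(m+1) - 2)/(2^(m+2) - 3)))`. -/
noncomputable def Ufun (m : ℕ) : ℝ :=
  ((2 : ℝ) ^ (m + 2) - 3) * (1 - binEnt (((2 : ℝ) ^ (m + 1) - 2) / ((2 : ℝ) ^ (m + 2) - 3)))

/-!
The masks `2^b + y·2^(b+2)` (`b = k-m-2`, `y < 2^m`) select codewords of `S_{n,k}` that vanish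
on the last, incomplete block of columns and are balanced on the complete blocks, so `S_{n,k}`
has at least `2^m` codewords of weight `d = (2^k - 2^(k-m))/2`. At `p = (1-δ)/2` with
`δ = (n-2d)/n` their contribution `2^m p^d (1-p)^(n-d)` to `P_ue` already exceeds `2^(k-n)`:
in logarithms this reads `(k-m) ln 2 < d ln(1-δ) + (n-d) ln(1+δ)`, whose right side exceeds
`(n-2d)²/(2n)`, and `(n-2d)²/(2n) ≥ (k-m) ln 2` is exactly `n ≥ 2d + γ₁(k,m)`.
-/

open Real

def bitParity (K v : ℕ) : ZMod 2 := ∑ i ∈ range K, if v.testBit i then 1 else 0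

-- The codeword `∑ᵢ Mᵢ · (row k-i of H_k(n))`, with `M` read in binary like the column values
def maskWord (k n M : ℕ) : Fin n → ZMod 2 := fun j => bitParity k (colVal k j &&& M)

lemma bitParity_zero (K : ℕ) : bitParity K 0 = 0 := by
  simp [bitParity]

lemma bitParity_xor (K x y : ℕ) : bitParity K (x ^^^ y) = bitParity K x + bitParity K y := by
  simp only [bitParity, ← sum_add_distrib, Nat.testBit_xor]
  refine sum_congr rfl fun i _ => ?_
  cases x.testBit i <;> cases y.testBit i <;> decide

lemma bitParity_two_pow {K b : ℕ} (hb : b < K) : bitParity K (2 ^ b) = 1 := by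
  rw [bitParity, sum_eq_single_of_mem b (mem_range.2 hb)]
  · simp
  · intro i _ hi
    simp [Ne.symm hi]

lemma bitParity_two_pow_and {K t : ℕ} (ht : t < K) (M : ℕ) :
    bitParity K (2 ^ t &&& M) = if M.testBit t then 1 else 0 := by
  have h : 2 ^ t &&& M = if M.testBit t then 2 ^ t else 0 := by
    apply Nat.eq_of_testBit_eq
    intro i
    rcases eq_or_ne t i with rfl | hne <;> split_ifs <;> simp_all
  rw [h]
  split_ifs
  exacts [bitParity_two_pow ht, bitParity_zero K]

lemma maskWord_mem_SCode (k n M : ℕ) : maskWord k n M ∈ SCode k n := by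
  have hrepr : maskWord k n M =
      ∑ i : Fin k, (if M.testBit (k - 1 - i) then (1 : ZMod 2) else 0) • Hrow k n (i + 1) := by
    funext j
    rw [Finset.sum_apply, maskWord, bitParity, sum_range]
    refine Fintype.sum_equiv Fin.revPerm _ _ fun x => ?_
    have hrev : ((Fin.revPerm x : Fin k) : ℕ) = k - 1 - x := by
      simp only [Fin.revPerm_apply, Fin.val_rev]; omega
    simp only [Pi.smul_apply, Hrow, hrev, smul_eq_mul, Nat.testBit_and,
      show k - (k - 1 - x + 1) = x by omega, show k - 1 - (k - 1 - x) = (x : ℕ) by omega]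
    cases (colVal k j).testBit x <;> cases M.testBit x <;> simp
  rw [hrepr]
  exact Submodule.sum_mem _ fun i _ => Submodule.smul_mem _ _ (Submodule.subset_span ⟨i, rfl⟩)

lemma colVal_block {k t c : ℕ} (htk : t < k) (hc : c < 2 ^ t) :
    colVal k (2 ^ k - 2 ^ (t + 1) + c) = 2 ^ t + c := by
  have h1 : 2 ^ (t + 1) ≤ 2 ^ k := Nat.pow_le_pow_right two_pos htk
  have hlog : Nat.log2 (2 ^ k - 1 - (2 ^ k - 2 ^ (t + 1) + c)) = t := by
    rw [Nat.log2_eq_log_two]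
    exact Nat.log_eq_of_pow_le_of_lt_pow (by omega) (by omega)
  rw [colVal, hlog]
  omega

lemma exists_eq_two_pow_sub_two_pow_add {k j : ℕ} (hj : j < 2 ^ k - 1) :
    ∃ t c, t < k ∧ c < 2 ^ t ∧ j = 2 ^ k - 2 ^ (t + 1) + c := by
  set u := 2 ^ k - 1 - j
  have hlb : 2 ^ Nat.log 2 u ≤ u := Nat.pow_log_le_self 2 (by omega)
  have hub : u < 2 ^ (Nat.log 2 u + 1) := Nat.lt_pow_succ_log_self one_lt_two u
  have htk : Nat.log 2 u < k := (Nat.pow_lt_pow_iff_right one_lt_two).1 (by omega)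
  have h1 : 2 ^ (Nat.log 2 u + 1) ≤ 2 ^ k := Nat.pow_le_pow_right two_pos htk
  exact ⟨Nat.log 2 u, j - (2 ^ k - 2 ^ (Nat.log 2 u + 1)), htk, by omega, by omega⟩

lemma colVal_injOn (k : ℕ) : Set.InjOn (colVal k) (Set.Iio (2 ^ k - 1)) := by
  intro j₁ hj₁ j₂ hj₂ h
  obtain ⟨t₁, c₁, ht₁, hc₁, rfl⟩ := exists_eq_two_pow_sub_two_pow_add hj₁
  obtain ⟨t₂, c₂, ht₂, hc₂, rfl⟩ := exists_eq_two_pow_sub_two_pow_add hj₂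
  rw [colVal_block ht₁ hc₁, colVal_block ht₂ hc₂] at h
  have hlog {t c : ℕ} (hc : c < 2 ^ t) : Nat.log 2 (2 ^ t + c) = t :=
    Nat.log_eq_of_pow_le_of_lt_pow (by omega) (by rw [pow_succ]; omega)
  have ht : t₁ = t₂ := by rw [← hlog hc₁, h, hlog hc₂]
  subst ht
  omega

lemma image_colVal_range {k s r n : ℕ} (hs : s < k) (hr : r ≤ 2 ^ s)
    (hn : n = 2 ^ k - 2 ^ (s + 1) + r) :
    (range n).image (colVal k) = Ico (2 ^ (s + 1)) (2 ^ k) ∪ Ico (2 ^ s) (2 ^ s + r) := by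
  have hsk : 2 ^ (s + 1) ≤ 2 ^ k := Nat.pow_le_pow_right two_pos hs
  have hs2 : 2 ^ (s + 1) = 2 * 2 ^ s := pow_succ' 2 s
  have hs1 : 1 ≤ 2 ^ s := Nat.one_le_two_pow
  ext v
  simp only [mem_image, mem_range, mem_union, mem_Ico]
  constructor
  · rintro ⟨j, hj, rfl⟩
    obtain ⟨t, c, ht, hc, rfl⟩ := exists_eq_two_pow_sub_two_pow_add (k := k) (j := j) (by omega)
    have htk : 2 ^ (t + 1) ≤ 2 ^ k := Nat.pow_le_pow_right two_pos ht
    have ht2 : 2 ^ (t + 1) = 2 * 2 ^ t := pow_succ' 2 t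
    rw [colVal_block ht hc]
    rcases lt_trichotomy t s with hts | rfl | hst
    · have : 2 ^ (t + 1) ≤ 2 ^ s := Nat.pow_le_pow_right two_pos hts
      omega
    · omega
    · have : 2 ^ (s + 1) ≤ 2 ^ t := Nat.pow_le_pow_right two_pos hst
      omega
  · rintro (⟨hv₁, hv₂⟩ | ⟨hv₁, hv₂⟩)
    · set t := Nat.log 2 v
      have hlb : 2 ^ t ≤ v := Nat.pow_log_le_self 2 (by omega)
      have hub : v < 2 ^ (t + 1) := Nat.lt_pow_succ_log_self one_lt_two v
      have ht : t < k := (Nat.pow_lt_pow_iff_right one_lt_two).1 (by omega)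
      have hst : s + 1 < t + 1 := (Nat.pow_lt_pow_iff_right one_lt_two).1 (by omega)
      have htk : 2 ^ (t + 1) ≤ 2 ^ k := Nat.pow_le_pow_right two_pos ht
      have hst' : 2 ^ (s + 1) ≤ 2 ^ t := Nat.pow_le_pow_right two_pos (by omega)
      have ht2 : 2 ^ (t + 1) = 2 * 2 ^ t := pow_succ' 2 t
      exact ⟨2 ^ k - 2 ^ (t + 1) + (v - 2 ^ t), by omega,
        by rw [colVal_block ht (by omega)]; omega⟩
    · exact ⟨2 ^ k - 2 ^ (s + 1) + (v - 2 ^ s), by omega,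
        by rw [colVal_block hs (by omega)]; omega⟩

lemma hammingNorm_maskWord {k n : ℕ} (hn : n < 2 ^ k) (M : ℕ) :
    hammingNorm (maskWord k n M) =
      #{v ∈ (range n).image (colVal k) | bitParity k (v &&& M) ≠ 0} := by
  rw [hammingNorm, filter_image, card_image_of_injOn]
  · refine card_bij (fun j _ => (j : ℕ)) ?_ (fun _ _ _ _ h => Fin.ext h) ?_
    · intro j hj
      rw [mem_filter] at hj ⊢
      exact ⟨mem_range.2 j.isLt, hj.2⟩
    · intro j hj
      rw [mem_filter, mem_range] at hj
      exact ⟨⟨j, hj.1⟩, mem_filter.2 ⟨mem_univ _, hj.2⟩, rfl⟩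
  · exact (colVal_injOn k).mono fun j hj => by
      simp only [coe_filter, mem_range, Set.mem_ofPred_eq] at hj
      exact Set.mem_Iio.2 (by omega)

lemma bitParity_xor_two_pow_and {k b M : ℕ} (hb : b < k) (hM : M.testBit b) (v : ℕ) :
    bitParity k ((v ^^^ 2 ^ b) &&& M) = bitParity k (v &&& M) + 1 := by
  rw [Nat.and_xor_distrib_right, bitParity_xor, bitParity_two_pow_and hb, if_pos hM]

lemma two_mul_card_filter_bitParity_and_ne_zero {k s b M : ℕ} (hbs : b < s) (hsk : s ≤ k)
    (hM : M.testBit b) :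
    2 * #{v ∈ Ico (2 ^ s) (2 ^ k) | bitParity k (v &&& M) ≠ 0} = 2 ^ k - 2 ^ s := by
  have hbk : 2 ^ b < 2 ^ k := Nat.pow_lt_pow_right one_lt_two (by omega)
  have hbs' : 2 ^ b < 2 ^ s := Nat.pow_lt_pow_right one_lt_two hbs
  have hmaps : ∀ v ∈ Ico (2 ^ s) (2 ^ k), v ^^^ 2 ^ b ∈ Ico (2 ^ s) (2 ^ k) := by
    intro v hv
    rw [mem_Ico] at hv ⊢
    refine ⟨?_, Nat.xor_lt_two_pow hv.2 hbk⟩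
    by_contra! h
    have := Nat.xor_lt_two_pow h hbs'
    rw [xor_cancel_right] at this
    omega
  have hflip : ∀ a : ZMod 2, a + 1 ≠ 0 ↔ ¬ a ≠ 0 := by decide
  -- `v ↦ v ^^^ 2 ^ b` is an involution of the interval that flips the parity
  have hhalf : #{v ∈ Ico (2 ^ s) (2 ^ k) | bitParity k (v &&& M) ≠ 0} =
      #{v ∈ Ico (2 ^ s) (2 ^ k) | ¬ bitParity k (v &&& M) ≠ 0} := by
    refine card_nbij' (· ^^^ 2 ^ b) (· ^^^ 2 ^ b) ?_ ?_ ?_ ?_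
    all_goals intro v hv
    all_goals simp only [coe_filter, Set.mem_ofPred_eq] at hv ⊢
    · refine ⟨hmaps v hv.1, ?_⟩
      rw [bitParity_xor_two_pow_and (by omega) hM, hflip, not_not]
      exact hv.2
    · refine ⟨hmaps v hv.1, ?_⟩
      rw [bitParity_xor_two_pow_and (by omega) hM, hflip]
      exact hv.2
    all_goals exact xor_cancel_right v (2 ^ b)
  have htotal := card_filter_add_card_filter_not (s := Ico (2 ^ s) (2 ^ k))
    (fun v => bitParity k (v &&& M) ≠ 0)
  rw [Nat.card_Ico] at htotal
  omega

lemma testBit_two_pow_or_shiftLeft (b y i : ℕ) : (2 ^ b ||| y <<< (b + 2)).testBit i =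
    (decide (b = i) || (decide (b + 2 ≤ i) && y.testBit (i - (b + 2)))) := by
  simp [Nat.testBit_or, Nat.testBit_two_pow, Nat.testBit_shiftLeft]

lemma and_two_pow_or_shiftLeft_eq_zero {b v : ℕ} (hv₁ : 2 ^ (b + 1) ≤ v)
    (hv₂ : v < 2 ^ (b + 1) + 2 ^ b) (y : ℕ) : v &&& (2 ^ b ||| y <<< (b + 2)) = 0 := by
  obtain ⟨c, hc, rfl⟩ : ∃ c < 2 ^ b, v = 2 ^ (b + 1) + c :=
    ⟨v - 2 ^ (b + 1), by omega, by omega⟩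
  have hv : 2 ^ (b + 1) + c < 2 ^ (b + 2) := by rw [pow_succ _ (b + 1)]; omega
  apply Nat.eq_of_testBit_eq
  intro i
  rw [Nat.testBit_and, testBit_two_pow_or_shiftLeft, Nat.zero_testBit]
  rcases eq_or_ne b i with rfl | hbi
  · rw [Nat.testBit_two_pow_add_gt (Nat.lt_succ_self b), Nat.testBit_lt_two_pow hc,
      Bool.false_and]
  · by_cases hi : b + 2 ≤ i
    · rw [Nat.testBit_lt_two_pow (hv.trans_le (Nat.pow_le_pow_right two_pos hi)),
        Bool.false_and]
    · simp [hbi, hi]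

lemma two_mul_hammingNorm_maskWord {k b r n : ℕ} (hb : b + 2 ≤ k) (hr : r ≤ 2 ^ b)
    (hn : n = 2 ^ k - 2 ^ (b + 2) + r) (y : ℕ) :
    2 * hammingNorm (maskWord k n (2 ^ b ||| y <<< (b + 2))) = 2 ^ k - 2 ^ (b + 2) := by
  have hbk : 2 ^ (b + 2) ≤ 2 ^ k := Nat.pow_le_pow_right two_pos hb
  have hb2 : 2 ^ (b + 2) = 4 * 2 ^ b := by rw [pow_add]; ring
  have hb1 : 2 ^ (b + 1) = 2 * 2 ^ b := pow_succ' 2 b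
  have hpos : 1 ≤ 2 ^ b := Nat.one_le_two_pow
  have hpartial : {v ∈ Ico (2 ^ (b + 1)) (2 ^ (b + 1) + r) |
      bitParity k (v &&& (2 ^ b ||| y <<< (b + 2))) ≠ 0} = ∅ := by
    refine filter_false_of_mem fun v hv => ?_
    rw [mem_Ico] at hv
    rw [and_two_pow_or_shiftLeft_eq_zero hv.1 (by omega), bitParity_zero, not_not]
  rw [hammingNorm_maskWord (by omega), image_colVal_range (s := b + 1) (by omega)
    (by omega) hn, filter_union, hpartial, union_empty]
  exact two_mul_card_filter_bitParity_and_ne_zero (b := b) (by omega) hb (by simp)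

lemma testBit_eq_of_maskWord_eq {k n M₁ M₂ t : ℕ} (ht : t < k) (hn : 2 ^ k - 2 ^ (t + 1) < n)
    (h : maskWord k n M₁ = maskWord k n M₂) : M₁.testBit t = M₂.testBit t := by
  have hcol : colVal k (2 ^ k - 2 ^ (t + 1)) = 2 ^ t := colVal_block (c := 0) ht (by positivity)
  have := congrFun h ⟨2 ^ k - 2 ^ (t + 1), hn⟩
  simp only [maskWord, hcol, bitParity_two_pow_and ht] at this
  revert this
  cases M₁.testBit t <;> cases M₂.testBit t <;> decide

lemma two_pow_le_numWt_SCode {k b r n w : ℕ} (hb : b + 2 ≤ k) (hr : r ≤ 2 ^ b)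
    (hn : n = 2 ^ k - 2 ^ (b + 2) + r) (hw : 2 * w = 2 ^ k - 2 ^ (b + 2)) :
    2 ^ (k - b - 2) ≤ numWt (SCode k n) w := by
  let word (y : ℕ) := maskWord k n (2 ^ b ||| y <<< (b + 2))
  have hinj : Set.InjOn word (range (2 ^ (k - b - 2))) := by
    intro y₁ hy₁ y₂ hy₂ h
    apply Nat.eq_of_testBit_eq
    intro i
    by_cases hi : i < k - b - 2
    · have hcol : 2 ^ k - 2 ^ (b + 2 + i + 1) < n := by
        have h₁ : 2 ^ (b + 2) < 2 ^ (b + 2 + i + 1) := Nat.pow_lt_pow_right one_lt_two (by omega)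
        have h₂ : 2 ^ (b + 2 + i + 1) ≤ 2 ^ k := Nat.pow_le_pow_right two_pos (by omega)
        omega
      have := testBit_eq_of_maskWord_eq (by omega) hcol h
      simpa [testBit_two_pow_or_shiftLeft, Nat.testBit_two_pow, show b ≠ b + 2 + i by omega]
        using this
    · have hle : 2 ^ (k - b - 2) ≤ 2 ^ i := Nat.pow_le_pow_right two_pos (by omega)
      rw [mem_coe, mem_range] at hy₁ hy₂
      rw [Nat.testBit_lt_two_pow (hy₁.trans_le hle), Nat.testBit_lt_two_pow (hy₂.trans_le hle)]
  calc 2 ^ (k - b - 2) = ((range (2 ^ (k - b - 2))).image word : Set (Fin n → ZMod 2)).ncard := by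
        rw [Set.ncard_coe_finset, card_image_of_injOn hinj, card_range]
    _ ≤ numWt (SCode k n) w := by
        refine Set.ncard_le_ncard ?_ (Set.toFinite _)
        rintro _ hc
        obtain ⟨y, -, rfl⟩ := mem_image.1 (mem_coe.1 hc)
        exact ⟨maskWord_mem_SCode k n _, Nat.eq_of_mul_eq_mul_left two_pos
          ((two_mul_hammingNorm_maskWord hb hr hn y).trans hw.symm)⟩

lemma sub_mul_sub_lt_mul_log_one_sub_add_mul_log_one_add {d n x : ℝ} (hn : 0 < n) (hx₀ : 0 < x)
    (hx₁ : x < 1) (hx : n * x ≤ n - 2 * d) :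
    (n - 2 * d) * x - n * x ^ 2 / 2 < d * log (1 - x) + (n - d) * log (1 + x) := by
  let g (y : ℝ) := d * log (1 - y) + (n - d) * log (1 + y) - (n - 2 * d) * y + n * y ^ 2 / 2
  have hderiv : ∀ y ∈ Set.Icc 0 x,
      HasDerivAt g (y ^ 2 * (n - 2 * d - n * y) / ((1 - y) * (1 + y))) y := by
    intro y hy
    have h₁ : 0 < 1 - y := by linarith [hy.2]
    have h₂ : 0 < 1 + y := by linarith [hy.1]
    have := (((((hasDerivAt_id y).const_sub 1).log h₁.ne').const_mul d).add
      ((((hasDerivAt_id y).const_add 1).log h₂.ne').const_mul (n - d))).sub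
      ((hasDerivAt_id y).const_mul (n - 2 * d)) |>.add
      (((hasDerivAt_pow 2 y).const_mul n).div_const 2)
    refine (this : HasDerivAt g _ y).congr_deriv ?_
    simp only [id]
    field_simp
    ring
  have hmono : StrictMonoOn g (Set.Icc 0 x) := by
    refine strictMonoOn_of_deriv_pos (convex_Icc 0 x)
      (fun y hy => (hderiv y hy).continuousAt.continuousWithinAt) fun y hy => ?_
    rw [interior_Icc] at hy
    rw [(hderiv y (Set.Ioo_subset_Icc_self hy)).deriv]
    have : 0 < (1 - y) * (1 + y) := mul_pos (by linarith [hy.2]) (by linarith [hy.1])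
    have : n * y < n * x := mul_lt_mul_of_pos_left hy.2 hn
    have : 0 < y ^ 2 := pow_pos hy.1 2
    exact div_pos (mul_pos this (by linarith)) ‹_›
  have := hmono (Set.left_mem_Icc.2 hx₀.le) (Set.right_mem_Icc.2 hx₀.le) hx₀
  simp only [g, sub_zero, add_zero, log_one, mul_zero, zero_add] at this
  linarith

lemma two_mul_mul_le_sq_of_add_add_sqrt_le {a N n : ℝ}
    (h : N + (a + √(a ^ 2 + 2 * a * N)) ≤ n) :
    2 * a * n ≤ (n - N) ^ 2 := by
  have := (Real.sqrt_le_iff.1 (show √(a ^ 2 + 2 * a * N) ≤ n - N - a by linarith)).2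
  nlinarith

lemma exists_lt_mul_log_one_sub_add_mul_log_one_add {a d n : ℝ} (hd : 0 < d) (hdn : 2 * d < n)
    (ha : 2 * a * n ≤ (n - 2 * d) ^ 2) :
    ∃ δ, 0 < δ ∧ δ < 1 ∧ a < d * log (1 - δ) + (n - d) * log (1 + δ) := by
  have hn : 0 < n := by linarith
  have hδ₀ : 0 < (n - 2 * d) / n := div_pos (by linarith) hn
  have hδ₁ : (n - 2 * d) / n < 1 := (div_lt_one hn).2 (by linarith)
  refine ⟨_, hδ₀, hδ₁, ?_⟩
  have key := sub_mul_sub_lt_mul_log_one_sub_add_mul_log_one_add (d := d) hn hδ₀ hδ₁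
    (by rw [mul_div_cancel₀ _ hn.ne'])
  have : (n - 2 * d) * ((n - 2 * d) / n) - n * ((n - 2 * d) / n) ^ 2 / 2 =
      (n - 2 * d) ^ 2 / (2 * n) := by
    field_simp
    ring
  have : a ≤ (n - 2 * d) ^ 2 / (2 * n) := by rw [le_div_iff₀ (by positivity)]; linarith
  linarith

lemma two_zpow_sub_lt_two_pow_mul_pow_mul_pow {k m n d : ℕ} {δ : ℝ} (hdn : d ≤ n)
    (hδ₀ : 0 < δ) (hδ₁ : δ < 1)
    (h : ((k : ℝ) - m) * log 2 < d * log (1 - δ) + (n - d) * log (1 + δ)) :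
    (2 : ℝ) ^ ((k : ℤ) - n) < 2 ^ m * ((1 - δ) / 2) ^ d * (1 - (1 - δ) / 2) ^ (n - d) := by
  have hp : 0 < (1 - δ) / 2 := by linarith
  have hq : 0 < (1 + δ) / 2 := by linarith
  rw [show 1 - (1 - δ) / 2 = (1 + δ) / 2 by ring,
    ← log_lt_log_iff (by positivity) (by positivity), log_mul (by positivity) (by positivity),
    log_mul (by positivity) (by positivity), log_zpow, log_pow, log_pow, log_pow,
    log_div (by linarith) two_ne_zero, log_div (by linarith) two_ne_zero]
  push_cast [hdn]
  linarith

lemma not_isSatisfactory_of_two_zpow_lt {k n w : ℕ} {C : Submodule (ZMod 2) (Fin n → ZMod 2)}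
    {p : ℝ} (hp : p ∈ Set.Icc (0 : ℝ) (1 / 2)) (hw : w ∈ Icc 1 n)
    (h : (2 : ℝ) ^ ((k : ℤ) - n) < numWt C w * p ^ w * (1 - p) ^ (n - w)) :
    ¬ IsSatisfactory k C := fun hsat => by
  have h₁ : 0 ≤ 1 - p := by linarith [hp.2]
  have := single_le_sum (f := fun w => (numWt C w : ℝ) * p ^ w * (1 - p) ^ (n - w))
    (fun i _ => by have := hp.1; positivity) hw
  have hle := hsat p hp
  rw [Pue] at hle
  linarith

theorem stmt14_general (k m n : ℕ) (hm1 : 1 ≤ m) (hm2 : m ≤ k - 2)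
    (hn1 : ((2 ^ k - 2 ^ (k - m) : ℕ) : ℝ) +
        (((k : ℝ) - (m : ℝ)) * Real.log 2 +
          Real.sqrt (((k : ℝ) - (m : ℝ)) ^ 2 * Real.log 2 ^ 2 +
            2 * ((k : ℝ) - (m : ℝ)) * ((2 ^ k - 2 ^ (k - m) : ℕ) : ℝ) * Real.log 2))
        ≤ (n : ℝ))
    (hn2 : n ≤ 2 ^ k - 2 ^ (k - m) + 2 ^ (k - m - 2)) :
    ¬ IsSatisfactory k (SCode k n) := by
  obtain ⟨b, hb⟩ : ∃ b, k - m = b + 2 := ⟨k - m - 2, by omega⟩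
  have hbk : 2 ^ (b + 2) < 2 ^ k := Nat.pow_lt_pow_right one_lt_two (by omega)
  obtain ⟨d, hd⟩ : ∃ d, 2 * d = 2 ^ k - 2 ^ (b + 2) := ⟨2 ^ (k - 1) - 2 ^ (b + 1), by
    rw [Nat.mul_sub, ← pow_succ', ← pow_succ', show k - 1 + 1 = k by omega]⟩
  rw [hb, ← hd, Nat.add_sub_cancel] at hn2
  rw [hb, ← hd] at hn1
  set a := ((k : ℝ) - m) * log 2
  have hkm : (m : ℝ) + 2 ≤ k := by exact_mod_cast (by omega : m + 2 ≤ k)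
  have ha : 0 < a := mul_pos (by linarith) (log_pos one_lt_two)
  rw [show ((k : ℝ) - m) ^ 2 * log 2 ^ 2 + 2 * ((k : ℝ) - m) * ↑(2 * d) * log 2 =
    a ^ 2 + 2 * a * ↑(2 * d) by ring] at hn1
  have hdn : 2 * d < n := by
    have := Real.sqrt_nonneg (a ^ 2 + 2 * a * ↑(2 * d))
    exact_mod_cast (show ((2 * d : ℕ) : ℝ) < n by linarith)
  have hA : 2 ^ m ≤ numWt (SCode k n) d := by
    simpa [show k - b - 2 = m by omega] using
      two_pow_le_numWt_SCode (r := n - 2 * d) (by omega) (by omega) (by omega) hd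
  have hquad := two_mul_mul_le_sq_of_add_add_sqrt_le hn1
  push_cast at hquad
  obtain ⟨δ, hδ₀, hδ₁, hδ⟩ := exists_lt_mul_log_one_sub_add_mul_log_one_add (d := d)
    (n := n) (by exact_mod_cast (by omega : 0 < d)) (by exact_mod_cast hdn) hquad
  refine not_isSatisfactory_of_two_zpow_lt (w := d) (p := (1 - δ) / 2)
    ⟨by linarith, by linarith⟩ (mem_Icc.2 ⟨by omega, by omega⟩) ?_
  calc (2 : ℝ) ^ ((k : ℤ) - n) < 2 ^ m * ((1 - δ) / 2) ^ d * (1 - (1 - δ) / 2) ^ (n - d) :=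
        two_zpow_sub_lt_two_pow_mul_pow_mul_pow (by omega) hδ₀ hδ₁ hδ
    _ ≤ numWt (SCode k n) d * ((1 - δ) / 2) ^ d * (1 - (1 - δ) / 2) ^ (n - d) :=
        mul_le_mul_of_nonneg_right (mul_le_mul_of_nonneg_right (by exact_mod_cast hA)
          (pow_nonneg (by linarith) _)) (pow_nonneg (by linarith) _)

/-- With
`γ₁(k,m) = (k-m)·ln 2 + √((k-m)²(ln 2)² + 2(k-m)(2^k - 2^(k-m))·ln 2)`, every
integer `n` with `2^k - 2^(k-m) + γ₁(k,m) ≤ n ≤ 2^k - 2^(k-m) + 2^(k-m-2)`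
yields an ugly (not satisfactory) code `S_{n,k}`. -/
theorem stmt14 (k m n : ℕ) (hk : 3 ≤ k) (hm1 : 1 ≤ m) (hm2 : m ≤ k - 2)
    (hn1 : ((2 ^ k - 2 ^ (k - m) : ℕ) : ℝ) +
        (((k : ℝ) - (m : ℝ)) * Real.log 2 +
          Real.sqrt (((k : ℝ) - (m : ℝ)) ^ 2 * Real.log 2 ^ 2 +
            2 * ((k : ℝ) - (m : ℝ)) * ((2 ^ k - 2 ^ (k - m) : ℕ) : ℝ) * Real.log 2))
        ≤ (n : ℝ))
    (hn2 : n ≤ 2 ^ k - 2 ^ (k - m) + 2 ^ (k - m - 2)) :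
    ¬ IsSatisfactory k (SCode k n) :=
  stmt14_general k m n hm1 hm2 hn1 hn2
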